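/- Let ρ₁, ρ₂, ρ₃ be density matrices on ℂ² and let B₁, B₂ be 2×2 complex Hermitian matrices with −I ⪯ B_j ⪯ I. Then the dimension witness I₃ = Tr(ρ₁B₁) + Tr(ρ₁B₂) + Tr(ρ₂B₁) − Tr(ρ₂B₂) − Tr(ρ₃B₁) satisfies I₃ ≤ 1 + 2√2. Moreover this bound is attained: there exist qubit density matrices ρ₁, ρ₂, ρ₃ and Hermitian involutions B₁, B₂ on ℂ² for which I₃ = 1 + 2√2. -/

import Mathlib

/-!
Write a qubit observable as `A = m • 1 + a · σ`, with Bloch vector `a ∈ ℝ³`. Its largest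
eigenvalue `m + ‖a‖` bounds `Re Tr (ρ A)` for every state `ρ` (Cauchy–Schwarz against the Bloch
vector of `ρ`, of length at most `1/2`), and `-1 ⪯ B ⪯ 1` amounts to `|m| + ‖b‖ ≤ 1`.
Regrouping the witness as `Tr ρ₁(B₁ + B₂) + Tr ρ₂(B₁ - B₂) + Tr ρ₃(-B₁)` bounds it by
`m₁ + ‖b₁‖ + ‖b₁ + b₂‖ + ‖b₁ - b₂‖`, and the parallelogram law gives
`‖b₁ + b₂‖ + ‖b₁ - b₂‖ ≤ 2 √(‖b₁‖² + ‖b₂‖²) ≤ 2 √2`.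
Equality holds for `B₁ = σ_z`, `B₂ = σ_x`, with `ρ₁, ρ₂, ρ₃` the `+1`-eigenstates of
`(σ_z + σ_x)/√2`, `(σ_z - σ_x)/√2` and `-σ_z`.
-/

open Matrix
open scoped ComplexOrder

lemma norm_add_add_norm_sub_le {E : Type*} [NormedAddCommGroup E] [InnerProductSpace ℝ E]
    (x y : E) : ‖x + y‖ + ‖x - y‖ ≤ 2 * √(‖x‖ ^ 2 + ‖y‖ ^ 2) := by
  have hpar := parallelogram_law_with_norm ℝ x y
  have hsq := Real.sq_sqrt (by positivity : 0 ≤ ‖x‖ ^ 2 + ‖y‖ ^ 2)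
  nlinarith [Real.sqrt_nonneg (‖x‖ ^ 2 + ‖y‖ ^ 2), sq_nonneg (‖x + y‖ - ‖x - y‖),
    norm_nonneg (x + y), norm_nonneg (x - y)]

namespace Matrix

lemma trace_witness_regroup {n R : Type*} [Fintype n] [CommRing R]
    (ρ₁ ρ₂ ρ₃ B₁ B₂ : Matrix n n R) :
    (ρ₁ * B₁).trace + (ρ₁ * B₂).trace + (ρ₂ * B₁).trace - (ρ₂ * B₂).trace - (ρ₃ * B₁).trace =
      (ρ₁ * (B₁ + B₂)).trace + (ρ₂ * (B₁ - B₂)).trace + (ρ₃ * -B₁).trace := by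
  simp only [mul_add, mul_sub, mul_neg, trace_add, trace_sub, trace_neg]
  ring

section Involution

variable {n : Type*} [Fintype n] [DecidableEq n] {A : Matrix n n ℂ}

lemma IsHermitian.posSemidef_half_smul_one_add (hA : A.IsHermitian) (hA2 : A * A = 1) :
    ((2⁻¹ : ℂ) • (1 + A)).PosSemidef := by
  have hP : ((2⁻¹ : ℂ) • (1 + A))ᴴ = (2⁻¹ : ℂ) • (1 + A) := by
    simp [conjTranspose_add, hA.eq]
  have hPP : (2⁻¹ : ℂ) • (1 + A) * ((2⁻¹ : ℂ) • (1 + A)) = (2⁻¹ : ℂ) • (1 + A) := by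
    rw [smul_mul_smul_comm, add_mul, mul_add, mul_add, hA2, one_mul, mul_one, one_mul]
    module
  rw [← hPP]
  nth_rw 1 [← hP]
  exact posSemidef_conjTranspose_mul_self _

lemma trace_half_smul_one_add_mul_self (hA2 : A * A = 1) :
    ((2⁻¹ : ℂ) • (1 + A) * A).trace = (A.trace + Fintype.card n) / 2 := by
  rw [smul_mul_assoc, add_mul, one_mul, hA2, trace_smul, trace_add, trace_one]
  ring

end Involution

lemma IsHermitian.exists_eq_fin_two {A : Matrix (Fin 2) (Fin 2) ℂ} (hA : A.IsHermitian) :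
    ∃ (a d : ℝ) (c : ℂ), A = !![(a : ℂ), c; star c, (d : ℂ)] := by
  refine ⟨(A 0 0).re, (A 1 1).re, A 0 1, ?_⟩
  ext i j
  fin_cases i <;> fin_cases j
  · exact (Complex.conj_eq_iff_re.mp (hA.apply 0 0)).symm
  · rfl
  · exact (hA.apply 1 0).symm
  · exact (Complex.conj_eq_iff_re.mp (hA.apply 1 1)).symm

/-- For `A = m • 1 + x σ_x + y σ_y + z σ_z` with real coefficients this is `(x, -y, z)`; the
sign of the `σ_y` coordinate plays no role in the norms and inner products below. -/
noncomputable def blochVector : Matrix (Fin 2) (Fin 2) ℂ →ₗ[ℝ] EuclideanSpace ℝ (Fin 3) where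
  toFun A := !₂[(A 0 1).re, (A 0 1).im, ((A 0 0).re - (A 1 1).re) / 2]
  map_add' A B := by ext i; fin_cases i <;> simp [add_sub_add_comm, add_div]
  map_smul' c A := by ext i; fin_cases i <;> simp [← mul_sub, mul_div_assoc]

@[simp]
lemma blochVector_one : blochVector 1 = 0 := by
  ext i; fin_cases i <;> simp [blochVector]

lemma IsHermitian.re_trace_mul {ρ A : Matrix (Fin 2) (Fin 2) ℂ} (hρ : ρ.IsHermitian)
    (hA : A.IsHermitian) :
    (ρ * A).trace.re =
      ρ.trace.re * A.trace.re / 2 + 2 * inner ℝ (blochVector ρ) (blochVector A) := by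
  obtain ⟨p, q, c, rfl⟩ := hρ.exists_eq_fin_two
  obtain ⟨a, d, b, rfl⟩ := hA.exists_eq_fin_two
  simp only [blochVector, LinearMap.coe_mk, AddHom.coe_mk, EuclideanSpace.inner_eq_star_dotProduct,
    dotProduct, Fin.sum_univ_three, trace_fin_two, mul_apply, Fin.sum_univ_two, of_apply, cons_val',
    cons_val_zero, cons_val_one, cons_val, cons_val_fin_one, Pi.star_apply, star_trivial,
    RCLike.star_def, Complex.add_re, Complex.mul_re, Complex.ofReal_re, Complex.ofReal_im,
    Complex.conj_re, Complex.conj_im]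
  ring

lemma IsHermitian.re_det {A : Matrix (Fin 2) (Fin 2) ℂ} (hA : A.IsHermitian) :
    A.det.re = (A.trace.re / 2) ^ 2 - ‖blochVector A‖ ^ 2 := by
  obtain ⟨a, d, c, rfl⟩ := hA.exists_eq_fin_two
  simp only [blochVector, LinearMap.coe_mk, AddHom.coe_mk, EuclideanSpace.real_norm_sq_eq,
    Fin.sum_univ_three, det_fin_two, trace_fin_two, of_apply, cons_val', cons_val_zero,
    cons_val_one, cons_val, cons_val_fin_one, RCLike.star_def, Complex.add_re, Complex.sub_re,
    Complex.mul_re, Complex.ofReal_re, Complex.ofReal_im, Complex.conj_re, Complex.conj_im]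
  ring

lemma PosSemidef.norm_blochVector_le {M : Matrix (Fin 2) (Fin 2) ℂ} (hM : M.PosSemidef) :
    ‖blochVector M‖ ≤ M.trace.re / 2 := by
  have hdet : 0 ≤ M.det.re := (Complex.nonneg_iff.mp hM.det_nonneg).1
  have htr : 0 ≤ M.trace.re := (Complex.nonneg_iff.mp hM.trace_nonneg).1
  rw [hM.isHermitian.re_det] at hdet
  exact (pow_le_pow_iff_left₀ (norm_nonneg _) (by positivity) two_ne_zero).mp (by linarith)

lemma PosSemidef.re_trace_mul_le {ρ A : Matrix (Fin 2) (Fin 2) ℂ} (hρ : ρ.PosSemidef)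
    (hρ₁ : ρ.trace = 1) (hA : A.IsHermitian) :
    (ρ * A).trace.re ≤ A.trace.re / 2 + ‖blochVector A‖ := by
  have hbρ : ‖blochVector ρ‖ ≤ 1 / 2 := by simpa [hρ₁] using hρ.norm_blochVector_le
  calc (ρ * A).trace.re = A.trace.re / 2 + 2 * inner ℝ (blochVector ρ) (blochVector A) := by
        rw [hρ.isHermitian.re_trace_mul hA, hρ₁, Complex.one_re, one_mul]
    _ ≤ A.trace.re / 2 + 2 * (‖blochVector ρ‖ * ‖blochVector A‖) := by
        gcongr; exact real_inner_le_norm _ _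
    _ ≤ A.trace.re / 2 + ‖blochVector A‖ := by
        nlinarith [norm_nonneg (blochVector A)]

lemma abs_re_trace_div_two_add_norm_blochVector_le_one {B : Matrix (Fin 2) (Fin 2) ℂ}
    (hsub : (1 - B).PosSemidef) (hadd : (1 + B).PosSemidef) :
    |B.trace.re / 2| + ‖blochVector B‖ ≤ 1 := by
  have h₁ := hsub.norm_blochVector_le
  have h₂ := hadd.norm_blochVector_le
  norm_num [trace_sub, trace_add] at h₁ h₂
  cases abs_cases (B.trace.re / 2) <;> linarith

/-- `reflection a b = a σ_z + b σ_x`. -/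
def reflection (a b : ℝ) : Matrix (Fin 2) (Fin 2) ℂ := !![(a : ℂ), b; b, -a]

lemma isHermitian_reflection (a b : ℝ) : (reflection a b).IsHermitian := by
  ext i j; fin_cases i <;> fin_cases j <;> simp [reflection]

lemma trace_reflection (a b : ℝ) : (reflection a b).trace = 0 := by
  simp [reflection, trace_fin_two]

lemma reflection_mul_self {a b : ℝ} (h : a ^ 2 + b ^ 2 = 1) :
    reflection a b * reflection a b = 1 := by
  have h' : (a : ℂ) ^ 2 + (b : ℂ) ^ 2 = 1 := by exact_mod_cast h
  ext i j
  fin_cases i <;> fin_cases j <;>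
    simp [reflection, mul_apply, Fin.sum_univ_two, ← sq, h', add_comm (_ ^ 2), mul_comm]

lemma reflection_add (a b c d : ℝ) :
    reflection a b + reflection c d = reflection (a + c) (b + d) := by
  ext i j; fin_cases i <;> fin_cases j <;> simp [reflection, add_comm]

lemma reflection_sub (a b c d : ℝ) :
    reflection a b - reflection c d = reflection (a - c) (b - d) := by
  ext i j; fin_cases i <;> fin_cases j <;> simp [reflection, neg_add_eq_sub]

lemma neg_reflection (a b : ℝ) : -reflection a b = reflection (-a) (-b) := by
  ext i j; fin_cases i <;> fin_cases j <;> simp [reflection]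

lemma ofReal_smul_reflection (r a b : ℝ) :
    (r : ℂ) • reflection a b = reflection (r * a) (r * b) := by
  ext i j; fin_cases i <;> fin_cases j <;> simp [reflection]

lemma trace_half_smul_one_add_reflection (a b : ℝ) :
    ((2⁻¹ : ℂ) • (1 + reflection a b)).trace = 1 := by
  simp [trace_add, trace_reflection]

lemma trace_half_smul_one_add_reflection_mul_self {a b : ℝ} (h : a ^ 2 + b ^ 2 = 1) :
    ((2⁻¹ : ℂ) • (1 + reflection a b) * reflection a b).trace = 1 := by
  rw [trace_half_smul_one_add_mul_self (reflection_mul_self h), trace_reflection]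
  norm_num

end Matrix

theorem re_trace_witness_le {ρ₁ ρ₂ ρ₃ B₁ B₂ : Matrix (Fin 2) (Fin 2) ℂ}
    (hρ₁ : ρ₁.PosSemidef) (htr₁ : ρ₁.trace = 1) (hρ₂ : ρ₂.PosSemidef) (htr₂ : ρ₂.trace = 1)
    (hρ₃ : ρ₃.PosSemidef) (htr₃ : ρ₃.trace = 1)
    (hB₁ : B₁.IsHermitian) (hB₁sub : (1 - B₁).PosSemidef) (hB₁add : (1 + B₁).PosSemidef)
    (hB₂ : B₂.IsHermitian) (hB₂sub : (1 - B₂).PosSemidef) (hB₂add : (1 + B₂).PosSemidef) :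
    ((ρ₁ * B₁).trace + (ρ₁ * B₂).trace + (ρ₂ * B₁).trace
      - (ρ₂ * B₂).trace - (ρ₃ * B₁).trace).re ≤ 1 + 2 * √2 := by
  have e₁ := hρ₁.re_trace_mul_le htr₁ (hB₁.add hB₂)
  have e₂ := hρ₂.re_trace_mul_le htr₂ (hB₁.sub hB₂)
  have e₃ := hρ₃.re_trace_mul_le htr₃ hB₁.neg
  simp only [trace_add, trace_sub, trace_neg, map_add, map_sub, map_neg, norm_neg,
    Complex.add_re, Complex.sub_re, Complex.neg_re] at e₁ e₂ e₃
  have hb₁ := abs_re_trace_div_two_add_norm_blochVector_le_one hB₁sub hB₁add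
  have hb₂ := abs_re_trace_div_two_add_norm_blochVector_le_one hB₂sub hB₂add
  have hpar := norm_add_add_norm_sub_le (blochVector B₁) (blochVector B₂)
  have hsqrt : √(‖blochVector B₁‖ ^ 2 + ‖blochVector B₂‖ ^ 2) ≤ √2 := by
    gcongr
    nlinarith [abs_nonneg (B₁.trace.re / 2), abs_nonneg (B₂.trace.re / 2),
      norm_nonneg (blochVector B₁), norm_nonneg (blochVector B₂)]
  rw [trace_witness_regroup, Complex.add_re, Complex.add_re]
  linarith [le_abs_self (B₁.trace.re / 2)]

theorem exists_re_trace_witness_eq :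
    ∃ ρ₁ ρ₂ ρ₃ B₁ B₂ : Matrix (Fin 2) (Fin 2) ℂ,
      ρ₁.PosSemidef ∧ ρ₁.trace = 1 ∧ ρ₂.PosSemidef ∧ ρ₂.trace = 1 ∧
      ρ₃.PosSemidef ∧ ρ₃.trace = 1 ∧
      B₁.IsHermitian ∧ B₁ * B₁ = 1 ∧ B₂.IsHermitian ∧ B₂ * B₂ = 1 ∧
      ((ρ₁ * B₁).trace + (ρ₁ * B₂).trace + (ρ₂ * B₁).trace
        - (ρ₂ * B₂).trace - (ρ₃ * B₁).trace).re = 1 + 2 * √2 := by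
  set s := (√2)⁻¹
  have hs : s ^ 2 + s ^ 2 = 1 := by rw [inv_pow, Real.sq_sqrt zero_le_two]; norm_num
  have hs' : s ^ 2 + (-s) ^ 2 = 1 := by rw [neg_sq, hs]
  have h₁ : (1 : ℝ) ^ 2 + 0 ^ 2 = 1 := by norm_num
  have h₂ : (0 : ℝ) ^ 2 + 1 ^ 2 = 1 := by norm_num
  have h₃ : (-1 : ℝ) ^ 2 + 0 ^ 2 = 1 := by norm_num
  have hsum : reflection 1 0 + reflection 0 1 = (√2 : ℂ) • reflection s s := by
    rw [reflection_add, ofReal_smul_reflection, mul_inv_cancel₀ (by positivity)]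
    norm_num
  have hdiff : reflection 1 0 - reflection 0 1 = (√2 : ℂ) • reflection s (-s) := by
    rw [reflection_sub, ofReal_smul_reflection, mul_neg, mul_inv_cancel₀ (by positivity)]
    norm_num
  have hneg : -reflection 1 0 = reflection (-1) 0 := by rw [neg_reflection, neg_zero]
  refine ⟨(2⁻¹ : ℂ) • (1 + reflection s s), (2⁻¹ : ℂ) • (1 + reflection s (-s)),
    (2⁻¹ : ℂ) • (1 + reflection (-1) 0), reflection 1 0, reflection 0 1,
    (isHermitian_reflection s s).posSemidef_half_smul_one_add (reflection_mul_self hs),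
    trace_half_smul_one_add_reflection s s,
    (isHermitian_reflection s (-s)).posSemidef_half_smul_one_add (reflection_mul_self hs'),
    trace_half_smul_one_add_reflection s (-s),
    (isHermitian_reflection (-1) 0).posSemidef_half_smul_one_add (reflection_mul_self h₃),
    trace_half_smul_one_add_reflection (-1) 0,
    isHermitian_reflection 1 0, reflection_mul_self h₁,
    isHermitian_reflection 0 1, reflection_mul_self h₂, ?_⟩
  rw [trace_witness_regroup, hsum, hdiff, hneg, mul_smul_comm, mul_smul_comm, trace_smul,
    trace_smul, trace_half_smul_one_add_reflection_mul_self hs,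
    trace_half_smul_one_add_reflection_mul_self hs',
    trace_half_smul_one_add_reflection_mul_self h₃]
  simp only [smul_eq_mul, mul_one, Complex.add_re, Complex.ofReal_re, Complex.one_re]
  ring

theorem dimension_witness_qubit_bound :
    (∀ (ρ₁ ρ₂ ρ₃ B₁ B₂ : Matrix (Fin 2) (Fin 2) ℂ),
      ρ₁.PosSemidef → ρ₁.trace = 1 →
      ρ₂.PosSemidef → ρ₂.trace = 1 →
      ρ₃.PosSemidef → ρ₃.trace = 1 →
      B₁.IsHermitian → (1 - B₁).PosSemidef → (1 + B₁).PosSemidef →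
      B₂.IsHermitian → (1 - B₂).PosSemidef → (1 + B₂).PosSemidef →
      ((ρ₁ * B₁).trace + (ρ₁ * B₂).trace + (ρ₂ * B₁).trace
          - (ρ₂ * B₂).trace - (ρ₃ * B₁).trace).re ≤ 1 + 2 * Real.sqrt 2)
    ∧ (∃ ρ₁ ρ₂ ρ₃ B₁ B₂ : Matrix (Fin 2) (Fin 2) ℂ,
        ρ₁.PosSemidef ∧ ρ₁.trace = 1 ∧
        ρ₂.PosSemidef ∧ ρ₂.trace = 1 ∧
        ρ₃.PosSemidef ∧ ρ₃.trace = 1 ∧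
        B₁.IsHermitian ∧ B₁ * B₁ = 1 ∧
        B₂.IsHermitian ∧ B₂ * B₂ = 1 ∧
        ((ρ₁ * B₁).trace + (ρ₁ * B₂).trace + (ρ₂ * B₁).trace
            - (ρ₂ * B₂).trace - (ρ₃ * B₁).trace).re = 1 + 2 * Real.sqrt 2) :=
  ⟨fun _ _ _ _ _ => re_trace_witness_le, exists_re_trace_witness_eq⟩
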